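/- arXiv:2403.05449 — 5 statements merged into one kernel-verified Lean document; each statement's English description precedes it below -/
import Mathlib

section
/- If γ ∈ M_k ⊗ M_m is a state that is positive under partial transpose (i.e., γ ≥ 0 and γ^Γ ≥ 0, where Γ transposes the second tensor factor), and W ∈ M_k, V ∈ M_m are orthogonal projections with tr(γ(W ⊗ V^⊥)) = tr(γ(W^⊥ ⊗ V)) = 0, then γ = (W⊗V)γ(W⊗V) + (W^⊥⊗V^⊥)γ(W^⊥⊗V^⊥). -/
open Matrix ComplexOrder Kronecker

/-- The partial transpose on the second tensor factor of `M_k ⊗ M_m ≅ M_{km}`. -/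
def partialTranspose {k m : ℕ} (γ : Matrix (Fin k × Fin m) (Fin k × Fin m) ℂ) :
    Matrix (Fin k × Fin m) (Fin k × Fin m) ℂ :=
  Matrix.of fun x y => γ (x.1, y.2) (y.1, x.2)

/-!
Since `γ ≥ 0`, the vanishing traces force `γ (W ⊗ V^⊥) = γ (W^⊥ ⊗ V) = 0`, so `γ` lives on the
range of `W ⊗ V + W^⊥ ⊗ V^⊥` and only the cross term `(W ⊗ V) γ (W^⊥ ⊗ V^⊥)` (and its adjoint)
remains to be killed. The partial transpose preserves `tr (X Y)`, so `γ^Γ ≥ 0` together with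
`tr (γ^Γ (W^⊥ ⊗ Vᵀ)) = tr (γ (W^⊥ ⊗ V)) = 0` gives `γ^Γ (W^⊥ ⊗ Vᵀ) = 0`; and the partial
transpose of the cross term is `(W ⊗ (V^⊥)ᵀ) γ^Γ (W^⊥ ⊗ Vᵀ)`.
-/

namespace IsStarProjection

variable {R : Type*} [CommRing R] [StarRing R]

theorem kronecker {l n : Type*} [Fintype l] [Fintype n] {A : Matrix l l R} {B : Matrix n n R}
    (hA : IsStarProjection A) (hB : IsStarProjection B) : IsStarProjection (A ⊗ₖ B) where
  isIdempotentElem := by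
    rw [IsIdempotentElem, ← mul_kronecker_mul, hA.isIdempotentElem.eq, hB.isIdempotentElem.eq]
  isSelfAdjoint := by
    rw [IsSelfAdjoint, star_eq_conjTranspose, conjTranspose_kronecker,
      ← star_eq_conjTranspose, ← star_eq_conjTranspose, hA.isSelfAdjoint.star_eq,
      hB.isSelfAdjoint.star_eq]

theorem transpose {n : Type*} [Fintype n] {A : Matrix n n R} (hA : IsStarProjection A) :
    IsStarProjection Aᵀ where
  isIdempotentElem := by rw [IsIdempotentElem, ← transpose_mul, hA.isIdempotentElem.eq]
  isSelfAdjoint := IsHermitian.transpose hA.isSelfAdjoint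

end IsStarProjection

theorem Matrix.PosSemidef.mul_eq_zero_of_trace_mul_eq_zero {𝕜 n : Type*} [RCLike 𝕜] [Fintype n]
    {M P : Matrix n n 𝕜} (hM : M.PosSemidef) (hP : IsStarProjection P)
    (h : (M * P).trace = 0) : M * P = 0 := by
  classical
  obtain ⟨B, rfl⟩ : ∃ B : Matrix n n 𝕜, M = Bᴴ * B := by
    open scoped MatrixOrder in exact CStarAlgebra.nonneg_iff_eq_star_mul_self.mp hM.nonneg
  have hBP : ((B * P)ᴴ * (B * P)).trace = 0 := by
    rw [conjTranspose_mul, IsHermitian.eq hP.isSelfAdjoint, mul_assoc, trace_mul_comm, ← mul_assoc,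
      mul_assoc _ P, hP.isIdempotentElem.eq, h]
  rw [mul_assoc, trace_conjTranspose_mul_self_eq_zero_iff.mp hBP, mul_zero]

theorem eq_mul_mul_add_mul_mul_of_mul_add_eq_self {R : Type*} [Ring R] [StarRing R] {a p q : R}
    (ha : IsSelfAdjoint a) (hp : IsSelfAdjoint p) (hq : IsSelfAdjoint q)
    (h : a * (p + q) = a) (hpq : p * a * q = 0) : a = p * a * p + q * a * q := by
  have hleft : (p + q) * a = a := by
    simpa only [star_mul, star_add, ha.star_eq, hp.star_eq, hq.star_eq] using congr_arg star h
  have hqp : q * a * p = 0 := by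
    simpa only [star_mul, ha.star_eq, hp.star_eq, hq.star_eq, star_zero, mul_assoc]
      using congr_arg star hpq
  calc a = (p + q) * a * (p + q) := by rw [mul_assoc, h, hleft]
    _ = p * a * p + q * a * q + (p * a * q + q * a * p) := by noncomm_ring
    _ = p * a * p + q * a * q := by rw [hpq, hqp, add_zero, add_zero]

theorem Matrix.kronecker_add_one_sub_kronecker_one_sub {R l n : Type*} [CommRing R]
    [DecidableEq l] [DecidableEq n] (A : Matrix l l R) (B : Matrix n n R) :
    A ⊗ₖ B + (1 - A) ⊗ₖ (1 - B) + (A ⊗ₖ (1 - B) + (1 - A) ⊗ₖ B) = 1 :=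
  calc _ = A ⊗ₖ (B + (1 - B)) + (1 - A) ⊗ₖ ((1 - B) + B) := by
        rw [kronecker_add, kronecker_add]; abel
    _ = 1 := by
        rw [add_sub_cancel, sub_add_cancel, ← add_kronecker, add_sub_cancel, one_kronecker_one]

section PartialTranspose

variable {k m : ℕ}

@[simp]
theorem partialTranspose_partialTranspose (X : Matrix (Fin k × Fin m) (Fin k × Fin m) ℂ) :
    partialTranspose (partialTranspose X) = X := rfl

theorem partialTranspose_eq_zero_iff {X : Matrix (Fin k × Fin m) (Fin k × Fin m) ℂ} :
    partialTranspose X = 0 ↔ X = 0 :=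
  ⟨fun h => by rw [← partialTranspose_partialTranspose X, h]; rfl, by rintro rfl; rfl⟩

theorem partialTranspose_kronecker (A : Matrix (Fin k) (Fin k) ℂ) (B : Matrix (Fin m) (Fin m) ℂ) :
    partialTranspose (A ⊗ₖ B) = A ⊗ₖ Bᵀ := by
  ext x y
  simp [partialTranspose]

theorem trace_partialTranspose_mul_partialTranspose
    (X Y : Matrix (Fin k × Fin m) (Fin k × Fin m) ℂ) :
    (partialTranspose X * partialTranspose Y).trace = (X * Y).trace := by
  simp only [trace, diag, mul_apply, partialTranspose, of_apply, ← Finset.univ_product_univ,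
    Finset.sum_product]
  rw [Finset.sum_congr rfl fun _ _ => Finset.sum_comm]
  exact Finset.sum_congr rfl fun _ _ =>
    (Finset.sum_congr rfl fun _ _ => Finset.sum_comm).trans Finset.sum_comm

theorem partialTranspose_kronecker_mul_mul_kronecker
    (X : Matrix (Fin k × Fin m) (Fin k × Fin m) ℂ)
    (A C : Matrix (Fin k) (Fin k) ℂ) (B D : Matrix (Fin m) (Fin m) ℂ) :
    partialTranspose ((A ⊗ₖ B) * X * (C ⊗ₖ D)) = (A ⊗ₖ Dᵀ) * partialTranspose X * (C ⊗ₖ Bᵀ) := by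
  ext x y
  simp only [partialTranspose, mul_apply, of_apply, kroneckerMap_apply, transpose_apply,
    Fintype.sum_prod_type, Finset.sum_mul]
  refine Finset.sum_congr rfl fun c _ => ?_
  rw [Finset.sum_comm]
  refine (Finset.sum_congr rfl fun _ _ => Finset.sum_comm).trans ?_
  rw [Finset.sum_comm]
  exact Finset.sum_congr rfl fun _ _ => Finset.sum_congr rfl fun _ _ =>
    Finset.sum_congr rfl fun _ _ => by ring

end PartialTranspose

/-- A PPT state `γ` (i.e. `γ ≥ 0` and `γ^Γ ≥ 0`) satisfying
`tr(γ(W ⊗ V^⊥)) = tr(γ(W^⊥ ⊗ V)) = 0` for orthogonal projections `W`, `V` decomposes as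
`γ = (W⊗V)γ(W⊗V) + (W^⊥⊗V^⊥)γ(W^⊥⊗V^⊥)`. -/
theorem stmt3 (k m : ℕ) (γ : Matrix (Fin k × Fin m) (Fin k × Fin m) ℂ)
    (W : Matrix (Fin k) (Fin k) ℂ) (V : Matrix (Fin m) (Fin m) ℂ)
    (hγ : γ.PosSemidef) (hγΓ : (partialTranspose γ).PosSemidef)
    (hWherm : W.IsHermitian) (hWproj : W * W = W)
    (hVherm : V.IsHermitian) (hVproj : V * V = V)
    (h1 : (γ * (W ⊗ₖ (1 - V))).trace = 0)
    (h2 : (γ * ((1 - W) ⊗ₖ V)).trace = 0) :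
    γ = (W ⊗ₖ V) * γ * (W ⊗ₖ V)
      + ((1 - W) ⊗ₖ (1 - V)) * γ * ((1 - W) ⊗ₖ (1 - V)) := by
  have hW : IsStarProjection W := ⟨hWproj, hWherm⟩
  have hV : IsStarProjection V := ⟨hVproj, hVherm⟩
  have hγR : γ * (W ⊗ₖ (1 - V)) = 0 :=
    hγ.mul_eq_zero_of_trace_mul_eq_zero (hW.kronecker hV.one_sub) h1
  have hγS : γ * ((1 - W) ⊗ₖ V) = 0 :=
    hγ.mul_eq_zero_of_trace_mul_eq_zero (hW.one_sub.kronecker hV) h2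
  have hγΓS : partialTranspose γ * ((1 - W) ⊗ₖ Vᵀ) = 0 :=
    hγΓ.mul_eq_zero_of_trace_mul_eq_zero (hW.one_sub.kronecker hV.transpose) (by
      rw [← partialTranspose_kronecker, trace_partialTranspose_mul_partialTranspose, h2])
  have hcross : (W ⊗ₖ V) * γ * ((1 - W) ⊗ₖ (1 - V)) = 0 := by
    rw [← partialTranspose_eq_zero_iff, partialTranspose_kronecker_mul_mul_kronecker, mul_assoc,
      hγΓS, mul_zero]
  refine eq_mul_mul_add_mul_mul_of_mul_add_eq_self hγ.isHermitian
    (hW.kronecker hV).isSelfAdjoint (hW.one_sub.kronecker hV.one_sub).isSelfAdjoint ?_ hcross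
  calc γ * (W ⊗ₖ V + (1 - W) ⊗ₖ (1 - V))
      = γ * (W ⊗ₖ V + (1 - W) ⊗ₖ (1 - V) + (W ⊗ₖ (1 - V) + (1 - W) ⊗ₖ V)) := by
        rw [mul_add γ (_ + _), mul_add γ (W ⊗ₖ (1 - V)), hγR, hγS, add_zero, add_zero]
    _ = γ := by rw [kronecker_add_one_sub_kronecker_one_sub, mul_one]
end

section
/- Let γ ∈ M_k ⊗ M_m be a state and W ∈ M_k an orthogonal projection. If there exists an orthogonal projection V ∈ M_m with tr(γ(W ⊗ V^⊥)) = tr(γ(W^⊥ ⊗ V)) = 0, then Im(F_γ(G_γ(W))) ⊆ Im(W), and hence the map F_γ ∘ G_γ leaves the subalgebra W M_k W invariant. -/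
open Matrix ComplexOrder Kronecker

noncomputable def Gmap {k m : ℕ} (γ : Matrix (Fin k × Fin m) (Fin k × Fin m) ℂ)
    (X : Matrix (Fin k) (Fin k) ℂ) : Matrix (Fin m) (Fin m) ℂ :=
  Matrix.of fun p q => ∑ i, ∑ j, γ (i, p) (j, q) * X j i

noncomputable def Fmap {k m : ℕ} (γ : Matrix (Fin k × Fin m) (Fin k × Fin m) ℂ)
    (Y : Matrix (Fin m) (Fin m) ℂ) : Matrix (Fin k) (Fin k) ℂ :=
  Matrix.of fun i j => ∑ p, ∑ q, γ (i, p) (j, q) * Y q p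

/-!
Both maps are determined by the duality `tr(γ (X ⊗ Y)) = tr(G_γ(X) Y) = tr(F_γ(Y) X)`, so
compressing `γ` by Kronecker factors compresses `G_γ` and `F_γ` accordingly. Since `γ` and
`W ⊗ V^⊥` are positive semidefinite, `tr(γ (W ⊗ V^⊥)) = 0` forces `γ (W ⊗ V^⊥) = 0`, and likewise
`γ (W^⊥ ⊗ V) = 0`; hence `γ (W ⊗ 1) = γ (W ⊗ V) = γ (1 ⊗ V)` and, taking adjoints,
`(W ⊗ 1) γ (W ⊗ 1) = (1 ⊗ V) γ (1 ⊗ V)`. Through the duality this says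
`G_γ(W X W) = V G_γ(X) V` and `F_γ(V Y V) = W F_γ(Y) W`, so `F_γ(G_γ(W X W)) = W F_γ(G_γ(X)) W`.
-/

namespace Matrix

variable {𝕜 n p : Type*} [RCLike 𝕜] [Fintype n] [Fintype p]

theorem PosSemidef.mul_eq_zero_of_trace_mul_eq_zero_s7 [DecidableEq n] {A B : Matrix n n 𝕜}
    (hA : A.PosSemidef) (hB : B.PosSemidef) (h : (A * B).trace = 0) : A * B = 0 := by
  -- with `A = C* C` and `B = D* D`, `tr(A B)` is the squared Frobenius norm of `C D*`
  open scoped MatrixOrder in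
  obtain ⟨C, rfl⟩ := CStarAlgebra.nonneg_iff_eq_star_mul_self.mp hA.nonneg
  open scoped MatrixOrder in
  obtain ⟨D, rfl⟩ := CStarAlgebra.nonneg_iff_eq_star_mul_self.mp hB.nonneg
  have hCD : C * Dᴴ = 0 := by
    rw [← trace_conjTranspose_mul_self_eq_zero_iff, ← h, conjTranspose_mul,
      conjTranspose_conjTranspose, Matrix.mul_assoc, trace_mul_comm, star_eq_conjTranspose,
      star_eq_conjTranspose]
    simp only [Matrix.mul_assoc]
  calc star C * C * (star D * D) = star C * (C * Dᴴ) * D := by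
        simp only [star_eq_conjTranspose, Matrix.mul_assoc]
    _ = 0 := by rw [hCD, Matrix.mul_zero, Matrix.zero_mul]

theorem _root_.IsStarProjection.posSemidef {P : Matrix n n 𝕜} (hP : IsStarProjection P) :
    P.PosSemidef := by
  open scoped MatrixOrder in exact nonneg_iff_posSemidef.mp hP.nonneg

variable [DecidableEq n] [DecidableEq p] {γ : Matrix (n × p) (n × p) 𝕜} {W : Matrix n n 𝕜}
  {V : Matrix p p 𝕜}

theorem PosSemidef.mul_kronecker_one_eq_mul_one_kronecker (hγ : γ.PosSemidef)
    (hW : IsStarProjection W) (hV : IsStarProjection V)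
    (h₁ : (γ * (W ⊗ₖ (1 - V))).trace = 0) (h₂ : (γ * ((1 - W) ⊗ₖ V)).trace = 0) :
    γ * (W ⊗ₖ 1) = γ * (1 ⊗ₖ V) := by
  have h₁' : γ * (W ⊗ₖ (1 - V)) = 0 :=
    hγ.mul_eq_zero_of_trace_mul_eq_zero_s7 (hW.posSemidef.kronecker hV.one_sub.posSemidef) h₁
  have h₂' : γ * ((1 - W) ⊗ₖ V) = 0 :=
    hγ.mul_eq_zero_of_trace_mul_eq_zero_s7 (hW.one_sub.posSemidef.kronecker hV.posSemidef) h₂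
  calc γ * (W ⊗ₖ 1) = γ * (W ⊗ₖ V) + γ * (W ⊗ₖ (1 - V)) := by
        rw [← Matrix.mul_add, ← kronecker_add, add_sub_cancel]
    _ = γ * (W ⊗ₖ V) + γ * ((1 - W) ⊗ₖ V) := by rw [h₁', h₂']
    _ = γ * (1 ⊗ₖ V) := by rw [← Matrix.mul_add, ← add_kronecker, add_sub_cancel]

theorem PosSemidef.kronecker_one_mul_mul_kronecker_one_eq (hγ : γ.PosSemidef)
    (hW : IsStarProjection W) (hV : IsStarProjection V)
    (h₁ : (γ * (W ⊗ₖ (1 - V))).trace = 0) (h₂ : (γ * ((1 - W) ⊗ₖ V)).trace = 0) :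
    (W ⊗ₖ 1) * γ * (W ⊗ₖ 1) = (1 ⊗ₖ V) * γ * (1 ⊗ₖ V) := by
  have hR := hγ.mul_kronecker_one_eq_mul_one_kronecker hW hV h₁ h₂
  have hL : (W ⊗ₖ 1) * γ = (1 ⊗ₖ V) * γ := by
    simpa only [conjTranspose_mul, conjTranspose_kronecker, conjTranspose_one, hγ.isHermitian.eq,
      show Wᴴ = W from hW.isSelfAdjoint, show Vᴴ = V from hV.isSelfAdjoint] using congrArg (·ᴴ) hR
  rw [Matrix.mul_assoc, hR, ← Matrix.mul_assoc, hL]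

end Matrix

section Duality

variable {k m : ℕ}

theorem trace_mul_kronecker_eq_trace_Gmap_mul (δ : Matrix (Fin k × Fin m) (Fin k × Fin m) ℂ)
    (X : Matrix (Fin k) (Fin k) ℂ) (Y : Matrix (Fin m) (Fin m) ℂ) :
    (δ * (X ⊗ₖ Y)).trace = (Gmap δ X * Y).trace := by
  simp only [trace, diag, mul_apply, Fintype.sum_prod_type, kroneckerMap_apply, Gmap, of_apply,
    Finset.sum_mul, mul_assoc]
  rw [Finset.sum_comm]
  exact Finset.sum_congr rfl fun p _ =>
    (Finset.sum_congr rfl fun i _ => Finset.sum_comm).trans Finset.sum_comm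

theorem trace_mul_kronecker_eq_trace_Fmap_mul (δ : Matrix (Fin k × Fin m) (Fin k × Fin m) ℂ)
    (X : Matrix (Fin k) (Fin k) ℂ) (Y : Matrix (Fin m) (Fin m) ℂ) :
    (δ * (X ⊗ₖ Y)).trace = (Fmap δ Y * X).trace := by
  simp only [trace, diag, mul_apply, Fintype.sum_prod_type, kroneckerMap_apply, Fmap, of_apply,
    Finset.sum_mul, mul_assoc, mul_comm (Y _ _)]
  exact Finset.sum_congr rfl fun i _ => Finset.sum_comm

theorem trace_kronecker_mul_mul_kronecker_mul_kronecker
    (δ : Matrix (Fin k × Fin m) (Fin k × Fin m) ℂ) (P R X : Matrix (Fin k) (Fin k) ℂ)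
    (Q S Y : Matrix (Fin m) (Fin m) ℂ) :
    ((P ⊗ₖ Q) * δ * (R ⊗ₖ S) * (X ⊗ₖ Y)).trace = (δ * ((R * X * P) ⊗ₖ (S * Y * Q))).trace := by
  rw [Matrix.mul_assoc, Matrix.mul_assoc, trace_mul_comm]
  simp only [Matrix.mul_assoc, mul_kronecker_mul]

theorem Gmap_kronecker_mul_mul_kronecker (δ : Matrix (Fin k × Fin m) (Fin k × Fin m) ℂ)
    (P R X : Matrix (Fin k) (Fin k) ℂ) (Q S : Matrix (Fin m) (Fin m) ℂ) :
    Gmap ((P ⊗ₖ Q) * δ * (R ⊗ₖ S)) X = Q * Gmap δ (R * X * P) * S := by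
  refine ext_iff_trace_mul_right.mpr fun Y => ?_
  rw [← trace_mul_kronecker_eq_trace_Gmap_mul, trace_kronecker_mul_mul_kronecker_mul_kronecker,
    trace_mul_kronecker_eq_trace_Gmap_mul]
  simp only [Matrix.mul_assoc]
  rw [trace_mul_comm Q]
  simp only [Matrix.mul_assoc]

theorem Fmap_kronecker_mul_mul_kronecker (δ : Matrix (Fin k × Fin m) (Fin k × Fin m) ℂ)
    (P R : Matrix (Fin k) (Fin k) ℂ) (Q S Y : Matrix (Fin m) (Fin m) ℂ) :
    Fmap ((P ⊗ₖ Q) * δ * (R ⊗ₖ S)) Y = P * Fmap δ (S * Y * Q) * R := by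
  refine ext_iff_trace_mul_right.mpr fun X => ?_
  rw [← trace_mul_kronecker_eq_trace_Fmap_mul, trace_kronecker_mul_mul_kronecker_mul_kronecker,
    trace_mul_kronecker_eq_trace_Fmap_mul]
  simp only [Matrix.mul_assoc]
  rw [trace_mul_comm P]
  simp only [Matrix.mul_assoc]

theorem Gmap_mul_mul_eq_of_kronecker_compress_eq {δ : Matrix (Fin k × Fin m) (Fin k × Fin m) ℂ}
    {P : Matrix (Fin k) (Fin k) ℂ} {Q : Matrix (Fin m) (Fin m) ℂ}
    (h : (P ⊗ₖ 1) * δ * (P ⊗ₖ 1) = (1 ⊗ₖ Q) * δ * (1 ⊗ₖ Q)) (X : Matrix (Fin k) (Fin k) ℂ) :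
    Gmap δ (P * X * P) = Q * Gmap δ X * Q := by
  simpa only [Matrix.one_mul, Matrix.mul_one] using
    (Gmap_kronecker_mul_mul_kronecker δ P P X 1 1).symm.trans
      (congrArg (Gmap · X) h |>.trans (Gmap_kronecker_mul_mul_kronecker δ 1 1 X Q Q))

theorem Fmap_mul_mul_eq_of_kronecker_compress_eq {δ : Matrix (Fin k × Fin m) (Fin k × Fin m) ℂ}
    {P : Matrix (Fin k) (Fin k) ℂ} {Q : Matrix (Fin m) (Fin m) ℂ}
    (h : (P ⊗ₖ 1) * δ * (P ⊗ₖ 1) = (1 ⊗ₖ Q) * δ * (1 ⊗ₖ Q)) (Y : Matrix (Fin m) (Fin m) ℂ) :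
    Fmap δ (Q * Y * Q) = P * Fmap δ Y * P := by
  simpa only [Matrix.one_mul, Matrix.mul_one] using
    (Fmap_kronecker_mul_mul_kronecker δ 1 1 Q Q Y).symm.trans
      (congrArg (Fmap · Y) h.symm |>.trans (Fmap_kronecker_mul_mul_kronecker δ P P 1 1 Y))

end Duality

/-- If there is an orthogonal projection `V` with
`tr(γ(W ⊗ V^⊥)) = tr(γ(W^⊥ ⊗ V)) = 0`, then `Im(F_γ(G_γ(W))) ⊆ Im(W)` and the subalgebra
`W M_k W` is left invariant by `F_γ ∘ G_γ`. -/
theorem stmt7 (k m : ℕ) (γ : Matrix (Fin k × Fin m) (Fin k × Fin m) ℂ)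
    (W : Matrix (Fin k) (Fin k) ℂ) (hγ : γ.PosSemidef)
    (hWherm : W.IsHermitian) (hWproj : W * W = W)
    (hV : ∃ V : Matrix (Fin m) (Fin m) ℂ, V.IsHermitian ∧ V * V = V ∧
      (γ * (W ⊗ₖ (1 - V))).trace = 0 ∧ (γ * ((1 - W) ⊗ₖ V)).trace = 0) :
    LinearMap.range (Fmap γ (Gmap γ W)).mulVecLin ≤ LinearMap.range W.mulVecLin ∧
    (∀ X : Matrix (Fin k) (Fin k) ℂ,
      Fmap γ (Gmap γ (W * X * W)) = W * (Fmap γ (Gmap γ (W * X * W))) * W) := by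
  obtain ⟨V, hVherm, hVproj, h₁, h₂⟩ := hV
  have hcompress :=
    hγ.kronecker_one_mul_mul_kronecker_one_eq ⟨hWproj, hWherm⟩ ⟨hVproj, hVherm⟩ h₁ h₂
  have hFG (X : Matrix (Fin k) (Fin k) ℂ) :
      Fmap γ (Gmap γ (W * X * W)) = W * Fmap γ (Gmap γ X) * W := by
    rw [Gmap_mul_mul_eq_of_kronecker_compress_eq hcompress,
      Fmap_mul_mul_eq_of_kronecker_compress_eq hcompress]
  refine ⟨?_, fun X => ?_⟩
  · calc LinearMap.range (Fmap γ (Gmap γ W)).mulVecLin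
        = LinearMap.range (W * (Fmap γ (Gmap γ 1) * W)).mulVecLin := by
          rw [← Matrix.mul_assoc, ← hFG, Matrix.mul_one, hWproj]
      _ ≤ LinearMap.range W.mulVecLin := by
          rw [mulVecLin_mul]
          exact LinearMap.range_comp_le_range _ _
  · rw [hFG, ← Matrix.mul_assoc, ← Matrix.mul_assoc, hWproj, Matrix.mul_assoc _ W W, hWproj]
end

section
/- If γ ∈ M_k ⊗ M_m is a completely reducible state and n ∈ ℕ, n ≥ 1, then γ^n is a completely reducible state. Similarly the positive semidefinite n-th root γ^{1/n} and the orthogonal projection onto Im(γ) are completely reducible. -/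
/-!
A positive semidefinite `A` is completely reducible as soon as `ker A ⊆ ker γ` for some
completely reducible `γ` and every orthogonal projection commuting with `γ` also commutes
with `A`. Indeed, for `A ≥ 0` the trace conditions make `A`, hence `γ`, vanish on the blocks
`W ⊗ V^⊥` and `W^⊥ ⊗ V`; then `γ` splits, so it commutes with `W ⊗ V`, hence so does `A`,
and `A` splits too. The power `γ^n`, a positive `n`-th root of `γ` (a continuous function of
`γ`) and the projection onto the range of `γ` all satisfy both conditions.
-/

open Matrix ComplexOrder Kronecker

def CompletelyReducible {a b : Type*} [Fintype a] [Fintype b] [DecidableEq a] [DecidableEq b]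
    (γ : Matrix (a × b) (a × b) ℂ) : Prop :=
  ∀ (W : Matrix a a ℂ) (V : Matrix b b ℂ),
    W.IsHermitian → W * W = W → V.IsHermitian → V * V = V →
    (γ * (W ⊗ₖ (1 - V))).trace = 0 → (γ * ((1 - W) ⊗ₖ V)).trace = 0 →
    γ = (W ⊗ₖ V) * γ * (W ⊗ₖ V) + ((1 - W) ⊗ₖ (1 - V)) * γ * ((1 - W) ⊗ₖ (1 - V))

theorem commute_of_eq_add_of_mul_eq_zero {R : Type*} [Semiring R] {a p q : R}
    (hp : IsIdempotentElem p) (hpq : p * q = 0) (hqp : q * p = 0)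
    (ha : a = p * a * p + q * a * q) : Commute p a := by
  have hpa : p * a = p * a * p := by
    conv_lhs => rw [ha]
    rw [mul_add, ← mul_assoc, ← mul_assoc, hp.eq, ← mul_assoc, ← mul_assoc, hpq, zero_mul,
      zero_mul, add_zero]
  have hap : a * p = p * a * p := by
    conv_lhs => rw [ha]
    rw [add_mul, mul_assoc _ p p, hp.eq, mul_assoc _ q p, hqp, mul_zero, add_zero]
  exact hpa.trans hap.symm

section StarRing

variable {R : Type*} [Ring R] [StarRing R]

theorem eq_add_of_commute_of_mul_eq_zero {a p q s : R} (ha : IsSelfAdjoint a)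
    (hs : IsSelfAdjoint s) (hsum : p + q + s = 1) (hpq : p * q = 0) (hqp : q * p = 0)
    (has : a * s = 0) (hpa : Commute p a) : a = p * a * p + q * a * q := by
  have hsa : s * a = 0 := by simpa [ha.star_eq, hs.star_eq] using congr(star $has)
  have hpaq : p * a * q = 0 := by rw [hpa.eq, mul_assoc, hpq, mul_zero]
  have hqap : q * a * p = 0 := by rw [mul_assoc, ← hpa.eq, ← mul_assoc, hqp, zero_mul]
  calc a = (p + q + s) * a * (p + q + s) := by rw [hsum, one_mul, mul_one]
    _ = p * a * p + q * a * q + (p * a * q + q * a * p) + (s * a * (p + q + s)) +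
        ((p + q) * (a * s)) := by noncomm_ring
    _ = p * a * p + q * a * q := by rw [hpaq, hqap, hsa, has]; noncomm_ring

theorem IsStarProjection.commute_of_mul_mul_eq {a e : R} (ha : IsSelfAdjoint a)
    (he : IsStarProjection e) (h : e * a * e = a * e) : Commute a e := by
  have h' : e * a * e = e * a := by
    simpa [ha.star_eq, he.isSelfAdjoint.star_eq, mul_assoc] using congr(star $h)
  exact h.symm.trans h'

end StarRing

section CFC

variable {A : Type*} [Ring A] [StarRing A] [Algebra ℝ A] [TopologicalSpace A]
  [ContinuousFunctionalCalculus ℝ A IsSelfAdjoint] [IsTopologicalRing A] [T2Space A]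
  [PartialOrder A] [NonnegSpectrumClass ℝ A] [StarOrderedRing A]

theorem Commute.of_pow_left_of_nonneg {a b : A} (ha : 0 ≤ a) {n : ℕ} (hn : n ≠ 0)
    (h : Commute (a ^ n) b) : Commute a b := by
  have hroot : (a ^ n) ^ (n⁻¹ : ℝ) = a := by
    rw [← CFC.rpow_natCast a n, CFC.rpow_rpow_of_exponent_nonneg a _ _ (by positivity)
      (by positivity), mul_inv_cancel₀ (by exact_mod_cast hn), CFC.rpow_one a]
  rw [← hroot, CFC.rpow_def]
  exact h.cfc_nnreal _

end CFC

namespace Matrix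

variable {𝕜 ι : Type*} [RCLike 𝕜] [Fintype ι] [DecidableEq ι]

theorem IsHermitian.mul_eq_zero_of_pow_mul_eq_zero {A M : Matrix ι ι 𝕜} (hA : A.IsHermitian)
    {n : ℕ} (hn : n ≠ 0) (h : A ^ n * M = 0) : A * M = 0 := by
  induction n with
  | zero => exact absurd rfl hn
  | succ n ih =>
    rcases eq_or_ne n 0 with rfl | hn'
    · simpa using h
    refine ih hn' (conjTranspose_mul_self_eq_zero.mp ?_)
    obtain ⟨k, rfl⟩ := Nat.exists_eq_succ_of_ne_zero hn'
    calc (A ^ (k + 1) * M)ᴴ * (A ^ (k + 1) * M) = Mᴴ * A ^ k * (A ^ (k + 1 + 1) * M) := by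
          rw [conjTranspose_mul, (hA.pow _).eq, ← mul_assoc, mul_assoc Mᴴ, ← pow_add,
            show k + 1 + (k + 1) = k + (k + 1 + 1) by ring, pow_add]
          simp only [mul_assoc]
      _ = 0 := by rw [h, mul_zero]

open scoped MatrixOrder in
theorem PosSemidef.mul_eq_zero_of_trace_mul_eq_zero_s11 {A E : Matrix ι ι 𝕜} (hA : A.PosSemidef)
    (hE : IsStarProjection E) (h : (A * E).trace = 0) : A * E = 0 := by
  obtain ⟨B, rfl⟩ := CStarAlgebra.nonneg_iff_eq_star_mul_self.mp hA.nonneg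
  rw [star_eq_conjTranspose] at h ⊢
  have hEAE : (B * E)ᴴ * (B * E) = E * (Bᴴ * B) * E := by
    rw [conjTranspose_mul, show Eᴴ = E from hE.isSelfAdjoint]; noncomm_ring
  have hzero : (B * E)ᴴ * (B * E) = 0 := by
    rw [← (posSemidef_conjTranspose_mul_self (B * E)).trace_eq_zero_iff, hEAE, mul_assoc,
      trace_mul_comm, mul_assoc, hE.isIdempotentElem.eq, h]
  rw [mul_assoc, conjTranspose_mul_self_eq_zero.mp hzero, mul_zero]

theorem mul_eq_self_of_range_le {R : Type*} [CommSemiring R] {P M : Matrix ι ι R}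
    (hP : IsIdempotentElem P) (h : LinearMap.range M.mulVecLin ≤ LinearMap.range P.mulVecLin) :
    P * M = M := by
  refine toLin'.injective (LinearMap.ext fun x ↦ ?_)
  obtain ⟨y, hy⟩ := h ⟨x, rfl⟩
  simp only [mulVecLin_apply] at hy
  rw [toLin'_apply, toLin'_apply, ← mulVec_mulVec, ← hy, mulVec_mulVec, hP.eq]

theorem commute_of_range_eq {P E M : Matrix ι ι 𝕜} (hP : IsSelfAdjoint P)
    (hE : IsStarProjection E) (hEM : LinearMap.range E.mulVecLin = LinearMap.range M.mulVecLin)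
    (hPM : Commute P M) : Commute P E := by
  refine hE.commute_of_mul_mul_eq hP ((mul_assoc _ _ _).trans ?_)
  refine mul_eq_self_of_range_le hE.isIdempotentElem ?_
  calc LinearMap.range (P * E).mulVecLin = (LinearMap.range M.mulVecLin).map P.mulVecLin := by
        rw [mulVecLin_mul, LinearMap.range_comp, hEM]
    _ = LinearMap.range (M * P).mulVecLin := by rw [← hPM.eq, mulVecLin_mul, LinearMap.range_comp]
    _ ≤ LinearMap.range E.mulVecLin := by
        rw [hEM, mulVecLin_mul]; exact LinearMap.range_comp_le_range _ _

end Matrix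

theorem IsStarProjection.kronecker_s11 {R a b : Type*} [CommSemiring R] [StarRing R] [Fintype a]
    [Fintype b] {W : Matrix a a R} {V : Matrix b b R} (hW : IsStarProjection W)
    (hV : IsStarProjection V) :
    IsStarProjection (W ⊗ₖ V) where
  isIdempotentElem := by
    rw [IsIdempotentElem, ← mul_kronecker_mul, hW.isIdempotentElem.eq, hV.isIdempotentElem.eq]
  isSelfAdjoint := by
    rw [IsSelfAdjoint, star_eq_conjTranspose, conjTranspose_kronecker, ← star_eq_conjTranspose,
      ← star_eq_conjTranspose, hW.isSelfAdjoint.star_eq, hV.isSelfAdjoint.star_eq]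

theorem kronecker_add_kronecker_one_sub {R a b : Type*} [CommRing R] [DecidableEq a]
    [DecidableEq b] (W : Matrix a a R) (V : Matrix b b R) :
    W ⊗ₖ V + (1 - W) ⊗ₖ (1 - V) + (W ⊗ₖ (1 - V) + (1 - W) ⊗ₖ V) = 1 := by
  rw [add_add_add_comm, add_comm ((1 - W) ⊗ₖ (1 - V)), ← kronecker_add, ← kronecker_add,
    add_sub_cancel, ← add_kronecker, add_sub_cancel, one_kronecker_one]

theorem CompletelyReducible.of_ker_le_of_commute {a b : Type*} [Fintype a] [Fintype b]
    [DecidableEq a] [DecidableEq b] {γ A : Matrix (a × b) (a × b) ℂ}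
    (hγ : CompletelyReducible γ) (hA : A.PosSemidef) (hker : ∀ M, A * M = 0 → γ * M = 0)
    (hcomm : ∀ P, IsStarProjection P → Commute P γ → Commute P A) :
    CompletelyReducible A := by
  intro W V hW hW2 hV hV2 h₁ h₂
  have hW' : IsStarProjection W := ⟨hW2, hW⟩
  have hV' : IsStarProjection V := ⟨hV2, hV⟩
  have hAR₁ := hA.mul_eq_zero_of_trace_mul_eq_zero_s11 (hW'.kronecker_s11 hV'.one_sub) h₁
  have hAR₂ := hA.mul_eq_zero_of_trace_mul_eq_zero_s11 (hW'.one_sub.kronecker_s11 hV') h₂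
  have hPQ : (W ⊗ₖ V) * ((1 - W) ⊗ₖ (1 - V)) = 0 := by
    rw [← mul_kronecker_mul, hW'.mul_one_sub_self, zero_kronecker]
  have hQP : ((1 - W) ⊗ₖ (1 - V)) * (W ⊗ₖ V) = 0 := by
    rw [← mul_kronecker_mul, hW'.one_sub_mul_self, zero_kronecker]
  have hγPQ := hγ W V hW hW2 hV hV2 (by rw [hker _ hAR₁, trace_zero])
    (by rw [hker _ hAR₂, trace_zero])
  have hPγ := commute_of_eq_add_of_mul_eq_zero (hW'.kronecker_s11 hV').isIdempotentElem hPQ hQP hγPQ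
  refine eq_add_of_commute_of_mul_eq_zero hA.1 ?_ (kronecker_add_kronecker_one_sub W V) hPQ hQP
    (by rw [mul_add, hAR₁, hAR₂, add_zero]) (hcomm _ (hW'.kronecker_s11 hV') hPγ)
  exact (hW'.kronecker_s11 hV'.one_sub).isSelfAdjoint.add (hW'.one_sub.kronecker_s11 hV').isSelfAdjoint

/-- If `γ` is a completely reducible state and `n ≥ 1`, then `γ^n`, the positive
semidefinite `n`-th root of `γ`, and the orthogonal projection onto `Im(γ)` are all completely
reducible. -/
theorem stmt11 (k m : ℕ) (γ : Matrix (Fin k × Fin m) (Fin k × Fin m) ℂ)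
    (hγ : γ.PosSemidef) (hCR : CompletelyReducible γ) (n : ℕ) (hn : 1 ≤ n) :
    CompletelyReducible (γ ^ n) ∧
    (∀ δ : Matrix (Fin k × Fin m) (Fin k × Fin m) ℂ,
      δ.PosSemidef → δ ^ n = γ → CompletelyReducible δ) ∧
    (∀ P : Matrix (Fin k × Fin m) (Fin k × Fin m) ℂ,
      P.IsHermitian → P * P = P →
      LinearMap.range P.mulVecLin = LinearMap.range γ.mulVecLin →
      CompletelyReducible P) := by
  open scoped MatrixOrder in
  have hn₀ : n ≠ 0 := Nat.one_le_iff_ne_zero.mp hn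
  refine ⟨?_, fun δ hδ hδγ ↦ ?_, fun P hP hP₂ hPγ ↦ ?_⟩
  · exact hCR.of_ker_le_of_commute (hγ.pow n)
      (fun M h ↦ hγ.1.mul_eq_zero_of_pow_mul_eq_zero hn₀ h) (fun P _ hc ↦ hc.pow_right n)
  · refine hCR.of_ker_le_of_commute hδ (fun M h ↦ ?_) (fun P _ hc ↦ ?_)
    · rw [← hδγ, ← Nat.sub_add_cancel hn, pow_succ, mul_assoc, h, mul_zero]
    · exact (Commute.of_pow_left_of_nonneg hδ.nonneg hn₀ (hδγ ▸ hc.symm)).symm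
  · have hE : IsStarProjection P := ⟨hP₂, hP⟩
    have hγP : γ * P = γ := by
      have h := congrArg conjTranspose (mul_eq_self_of_range_le hP₂ hPγ.ge)
      rwa [conjTranspose_mul, hP.eq, hγ.1.eq] at h
    refine hCR.of_ker_le_of_commute hE.nonneg.posSemidef
      (fun M h ↦ by rw [← hγP, mul_assoc, h, mul_zero])
      (fun Q hQ hc ↦ commute_of_range_eq hQ.isSelfAdjoint hE hPγ hc)
end

section
/- Let γ be a state on a multipartite system, viewed as a bipartite state on H_A ⊗ (H_1 ⊗ H_B) that is completely reducible. Then the partial trace of γ over H_1, viewed as a bipartite state on H_A ⊗ H_B, is also completely reducible. Concretely: if γ ∈ M_k ⊗ (M_n ⊗ M_m) is completely reducible as a state in M_k ⊗ M_{nm}, then γ_1 = (Id_k ⊗ Tr_n ⊗ Id_m)(γ) ∈ M_k ⊗ M_m is completely reducible. -/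
open Matrix ComplexOrder Kronecker

private lemma rot3 {M : Type*} [AddCommMonoid M] {B C D : Type*} [Fintype B] [Fintype C] [Fintype D]
    (f : B → C → D → M) :
    (∑ b : B, ∑ c : C, ∑ d : D, f b c d) = ∑ d : D, ∑ b : B, ∑ c : C, f b c d := by
  rw [show (∑ b : B, ∑ c : C, ∑ d : D, f b c d) = ∑ b : B, ∑ d : D, ∑ c : C, f b c d from
    Finset.sum_congr rfl fun b _ => Finset.sum_comm, Finset.sum_comm]

private lemma rot4 {M : Type*} [AddCommMonoid M] {A B C D : Type*} [Fintype A] [Fintype B]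
    [Fintype C] [Fintype D] (f : A → B → C → D → M) :
    (∑ a : A, ∑ b : B, ∑ c : C, ∑ d : D, f a b c d)
      = ∑ d : D, ∑ a : A, ∑ b : B, ∑ c : C, f a b c d := by
  rw [show (∑ a : A, ∑ b : B, ∑ c : C, ∑ d : D, f a b c d)
      = ∑ a : A, ∑ d : D, ∑ b : B, ∑ c : C, f a b c d from
    Finset.sum_congr rfl fun a _ => rot3 _, Finset.sum_comm]

noncomputable def ptr {k n m : ℕ}
    (γ : Matrix (Fin k × (Fin n × Fin m)) (Fin k × (Fin n × Fin m)) ℂ) :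
    Matrix (Fin k × Fin m) (Fin k × Fin m) ℂ :=
  Matrix.of fun x y => ∑ p : Fin n, γ (x.1, (p, x.2)) (y.1, (p, y.2))

set_option maxHeartbeats 1000000 in
lemma ptr_trace {k n m : ℕ} (γ : Matrix (Fin k × (Fin n × Fin m)) (Fin k × (Fin n × Fin m)) ℂ)
    (W : Matrix (Fin k) (Fin k) ℂ) (V : Matrix (Fin m) (Fin m) ℂ) :
    ((ptr γ) * (W ⊗ₖ V)).trace = (γ * (W ⊗ₖ ((1 : Matrix (Fin n) (Fin n) ℂ) ⊗ₖ V))).trace := by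
  simp only [Matrix.trace, Matrix.diag, Matrix.mul_apply, ptr, Matrix.of_apply,
    Matrix.kroneckerMap_apply, Fintype.sum_prod_type, Matrix.one_apply, Finset.sum_mul,
    Finset.mul_sum, mul_ite, ite_mul, mul_zero, zero_mul, mul_one, one_mul]
  refine Finset.sum_congr rfl fun x _ => ?_
  rw [rot4]
  refine Finset.sum_congr rfl fun p _ => ?_
  conv_rhs => rw [show (∑ x2 : Fin m, ∑ x3 : Fin k, ∑ x4 : Fin n, ∑ x5 : Fin m,
      (if x4 = p then γ (x, p, x2) (x3, x4, x5) * (W x3 x * V x5 x2) else 0))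
    = ∑ x2 : Fin m, ∑ x3 : Fin k, ∑ x5 : Fin m, ∑ x4 : Fin n,
      (if x4 = p then γ (x, p, x2) (x3, x4, x5) * (W x3 x * V x5 x2) else 0) from
    Finset.sum_congr rfl fun _ _ => Finset.sum_congr rfl fun _ _ => Finset.sum_comm]
  simp [Finset.sum_ite_eq']

set_option maxHeartbeats 1000000 in
lemma ptr_mul_left {k n m : ℕ} (γ : Matrix (Fin k × (Fin n × Fin m)) (Fin k × (Fin n × Fin m)) ℂ)
    (P : Matrix (Fin k) (Fin k) ℂ) (Q : Matrix (Fin m) (Fin m) ℂ) :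
    ptr ((P ⊗ₖ ((1 : Matrix (Fin n) (Fin n) ℂ) ⊗ₖ Q)) * γ) = (P ⊗ₖ Q) * ptr γ := by
  ext x y
  simp only [Matrix.mul_apply, ptr, Matrix.of_apply, Matrix.kroneckerMap_apply,
    Fintype.sum_prod_type, Matrix.one_apply, Finset.sum_mul, Finset.mul_sum, mul_ite, ite_mul,
    mul_zero, zero_mul, mul_one, one_mul]
  conv_rhs => rw [rot3]
  refine Finset.sum_congr rfl fun p _ => Finset.sum_congr rfl fun j _ => ?_
  rw [Finset.sum_comm]
  simp [Finset.sum_ite_eq]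

set_option maxHeartbeats 1000000 in
lemma ptr_mul_right {k n m : ℕ} (γ : Matrix (Fin k × (Fin n × Fin m)) (Fin k × (Fin n × Fin m)) ℂ)
    (P : Matrix (Fin k) (Fin k) ℂ) (Q : Matrix (Fin m) (Fin m) ℂ) :
    ptr (γ * (P ⊗ₖ ((1 : Matrix (Fin n) (Fin n) ℂ) ⊗ₖ Q))) = ptr γ * (P ⊗ₖ Q) := by
  ext x y
  simp only [Matrix.mul_apply, ptr, Matrix.of_apply, Matrix.kroneckerMap_apply,
    Fintype.sum_prod_type, Matrix.one_apply, Finset.sum_mul, Finset.mul_sum, mul_ite, ite_mul,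
    mul_zero, zero_mul, mul_one, one_mul]
  conv_rhs => rw [rot3]
  refine Finset.sum_congr rfl fun p _ => Finset.sum_congr rfl fun j _ => ?_
  rw [Finset.sum_comm]
  simp [Finset.sum_ite_eq']

lemma ptr_add {k n m : ℕ} (A B : Matrix (Fin k × (Fin n × Fin m)) (Fin k × (Fin n × Fin m)) ℂ) :
    ptr (A + B) = ptr A + ptr B := by
  ext x y
  simp [ptr, Finset.sum_add_distrib]

lemma ptr_posSemidef {k n m : ℕ}
    (γ : Matrix (Fin k × (Fin n × Fin m)) (Fin k × (Fin n × Fin m)) ℂ) (hγ : γ.PosSemidef) :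
    (ptr γ).PosSemidef := by
  have h : ptr γ = ∑ p : Fin n,
      γ.submatrix (fun x : Fin k × Fin m => (x.1, (p, x.2)))
        (fun x : Fin k × Fin m => (x.1, (p, x.2))) := by
    ext x y
    simp [ptr, Matrix.sum_apply]
  rw [h]
  exact Finset.sum_induction _ _ (fun a b ha hb => ha.add hb) Matrix.PosSemidef.zero
    fun p _ => hγ.submatrix _

lemma one_kron_hermitian {n m : ℕ} (V : Matrix (Fin m) (Fin m) ℂ) (hV : V.IsHermitian) :
    ((1 : Matrix (Fin n) (Fin n) ℂ) ⊗ₖ V).IsHermitian := by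
  ext x y
  simp only [Matrix.conjTranspose_apply, Matrix.kroneckerMap_apply, Matrix.one_apply]
  by_cases h : x.1 = y.1
  · simp [h, hV.apply]
  · simp [h, Ne.symm h]

lemma one_sub_one_kron {n m : ℕ} (V : Matrix (Fin m) (Fin m) ℂ) :
    (1 : Matrix (Fin n × Fin m) (Fin n × Fin m) ℂ) - ((1 : Matrix (Fin n) (Fin n) ℂ) ⊗ₖ V)
      = (1 : Matrix (Fin n) (Fin n) ℂ) ⊗ₖ ((1 : Matrix (Fin m) (Fin m) ℂ) - V) := by
  ext x y
  simp only [Matrix.sub_apply, Matrix.kroneckerMap_apply, Matrix.one_apply, Prod.ext_iff]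
  by_cases h1 : x.1 = y.1 <;> by_cases h2 : x.2 = y.2 <;> simp [h1, h2]

/-- If `γ ∈ M_k ⊗ (M_n ⊗ M_m)` is a completely reducible state (as a bipartite
state in `M_k ⊗ M_{nm}`), then its partial trace over the middle factor `M_n`, namely
`γ₁ ∈ M_k ⊗ M_m` with `γ₁((i,q),(j,q')) = ∑ p, γ((i,(p,q)),(j,(p,q')))`, is a completely
reducible state. -/
theorem stmt12 (k n m : ℕ)
    (γ : Matrix (Fin k × (Fin n × Fin m)) (Fin k × (Fin n × Fin m)) ℂ)
    (hγ : γ.PosSemidef) (hCR : CompletelyReducible γ)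
    (γ₁ : Matrix (Fin k × Fin m) (Fin k × Fin m) ℂ)
    (hγ₁ : γ₁ = Matrix.of fun x y => ∑ p : Fin n, γ (x.1, (p, x.2)) (y.1, (p, y.2))) :
    γ₁.PosSemidef ∧ CompletelyReducible γ₁ := by
  have hptr : γ₁ = ptr γ := hγ₁
  subst hptr
  refine ⟨ptr_posSemidef γ hγ, ?_⟩
  intro W V hW hWi hV hVi ht1 ht2
  have hV'H : ((1 : Matrix (Fin n) (Fin n) ℂ) ⊗ₖ V).IsHermitian := one_kron_hermitian V hV
  have hV'i : ((1 : Matrix (Fin n) (Fin n) ℂ) ⊗ₖ V) * ((1 : Matrix (Fin n) (Fin n) ℂ) ⊗ₖ V)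
      = (1 : Matrix (Fin n) (Fin n) ℂ) ⊗ₖ V := by
    rw [← Matrix.mul_kronecker_mul, one_mul, hVi]
  have h1 : (γ * (W ⊗ₖ ((1 : Matrix (Fin n × Fin m) (Fin n × Fin m) ℂ)
      - (1 : Matrix (Fin n) (Fin n) ℂ) ⊗ₖ V))).trace = 0 := by
    rw [one_sub_one_kron, ← ptr_trace]; exact ht1
  have h2 : (γ * ((1 - W) ⊗ₖ ((1 : Matrix (Fin n) (Fin n) ℂ) ⊗ₖ V))).trace = 0 := by
    rw [← ptr_trace]; exact ht2
  have key := hCR W ((1 : Matrix (Fin n) (Fin n) ℂ) ⊗ₖ V) hW hWi hV'H hV'i h1 h2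
  rw [one_sub_one_kron] at key
  have h3 := congrArg ptr key
  rw [ptr_add, ptr_mul_right, ptr_mul_right, ptr_mul_left, ptr_mul_left] at h3
  exact h3
end

section
/- A pure state γ = vv* ∈ M_k ⊗ M_m is completely reducible if and only if it is separable, i.e., v = a ⊗ b is a product vector. In particular, writing v = (R ⊗ Id)u_m for R ∈ M_{k×m}, the map F_γ ∘ G_γ(X) = (RR*)X(RR*) fails the complete reducibility criterion whenever rank(R) > 1: there is an orthogonal projection V_1 = r_1 r_1* with F_γ∘G_γ(V_1 M_k V_1) ⊆ V_1 M_k V_1 but F_γ∘G_γ(r_1 r_2*) ≠ 0 for a suitable unit vector r_2 orthogonal to r_1. -/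
open Matrix ComplexOrder Kronecker

/-!
Write `v = vec X`. For orthogonal projections `W`, `V` the two trace conditions say that `v` is
killed by `W ⊗ (1 - V)` and `(1 - W) ⊗ V`, so `v = P v + Q v` with `P = W ⊗ V`,
`Q = (1 - W) ⊗ (1 - V)` and `P v ⟂ Q v`; the reducibility identity then holds iff `P v = 0` or
`Q v = 0`. For a product vector `a ⊗ b`, `(W ⊗ (1 - V)) (a ⊗ b) = W a ⊗ (1 - V) b` vanishes only
if `W a = 0` or `(1 - V) b = 0`, which kills `P v` or `Q v`. If `X` has rank at least two, a pair
of singular vectors `x`, `y = Xᴴ x` of `X` gives rank-one projections `V`, `W` with `V X = X W`,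
which split `X` into two nonzero diagonal blocks.
-/

namespace Matrix

section Algebra

variable {α n p : Type*}

theorem vecMulVec_eq_zero_iff [MulZeroClass α] [NoZeroDivisors α] {a : n → α} {b : p → α} :
    vecMulVec a b = 0 ↔ a = 0 ∨ b = 0 := by
  simp only [← ext_iff, vecMulVec_apply, zero_apply, mul_eq_zero, funext_iff, Pi.zero_apply,
    forall_or_left, forall_or_right]

theorem vec_vecMulVec [CommMagma α] (a : n → α) (b : p → α) :
    vec (vecMulVec b a) = fun x => a x.1 * b x.2 := by
  ext x
  simp [vecMulVec_apply, mul_comm]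

theorem kronecker_mulVec_vec_vecMulVec [CommSemiring α] [Fintype n] [Fintype p]
    (A : Matrix n n α) (B : Matrix p p α) (a : n → α) (b : p → α) :
    (A ⊗ₖ B) *ᵥ vec (vecMulVec b a) = vec (vecMulVec (B *ᵥ b) (A *ᵥ a)) := by
  rw [kronecker_mulVec_vec, mul_vecMulVec, vecMulVec_mul, vecMul_transpose]

variable [Ring α] [Fintype n] [Fintype p] {V : Matrix n n α} {W : Matrix p p α} {X : Matrix n p α}

theorem mul_mul_one_sub_eq_zero [DecidableEq p] (hV : IsIdempotentElem V) (h : V * X = X * W) :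
    V * X * (1 - W) = 0 := by
  rw [Matrix.mul_sub, Matrix.mul_one, Matrix.mul_assoc, ← h, ← Matrix.mul_assoc, hV.eq, sub_self]

theorem one_sub_mul_mul_eq_zero [DecidableEq n] (hW : IsIdempotentElem W) (h : V * X = X * W) :
    (1 - V) * X * W = 0 := by
  rw [Matrix.sub_mul, Matrix.sub_mul, Matrix.one_mul, h, Matrix.mul_assoc, hW.eq, sub_self]

end Algebra

variable {𝕜 n p : Type*} [RCLike 𝕜] [Fintype n] [Fintype p]

section StarProjection

theorem IsStarProjection.transpose {P : Matrix n n 𝕜} (hP : IsStarProjection P) :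
    IsStarProjection Pᵀ :=
  ⟨by rw [IsIdempotentElem, ← transpose_mul, hP.isIdempotentElem.eq],
    IsHermitian.transpose hP.isSelfAdjoint⟩

theorem IsStarProjection.kronecker {P : Matrix n n 𝕜} {Q : Matrix p p 𝕜}
    (hP : IsStarProjection P) (hQ : IsStarProjection Q) : IsStarProjection (P ⊗ₖ Q) :=
  ⟨by rw [IsIdempotentElem, ← mul_kronecker_mul, hP.isIdempotentElem.eq, hQ.isIdempotentElem.eq],
    by rw [IsSelfAdjoint, star_eq_conjTranspose, conjTranspose_kronecker, ← star_eq_conjTranspose,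
      ← star_eq_conjTranspose, hP.isSelfAdjoint.star_eq, hQ.isSelfAdjoint.star_eq]⟩

theorem IsStarProjection.dotProduct_mulVec_eq_zero_iff {P : Matrix n n 𝕜}
    (hP : IsStarProjection P) {v : n → 𝕜} : star v ⬝ᵥ (P *ᵥ v) = 0 ↔ P *ᵥ v = 0 := by
  rw [← dotProduct_star_self_eq_zero, star_mulVec, ← star_eq_conjTranspose,
    hP.isSelfAdjoint.star_eq, ← dotProduct_mulVec, mulVec_mulVec, hP.isIdempotentElem.eq]

theorem IsStarProjection.mul_vecMulVec_star_mul {P : Matrix n n 𝕜} (hP : IsStarProjection P)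
    (v : n → 𝕜) : P * vecMulVec v (star v) * P = vecMulVec (P *ᵥ v) (star (P *ᵥ v)) := by
  rw [mul_vecMulVec, vecMulVec_mul, star_mulVec, ← star_eq_conjTranspose, hP.isSelfAdjoint.star_eq]

theorem trace_vecMulVec_mul (v w : n → 𝕜) (M : Matrix n n 𝕜) :
    (vecMulVec v w * M).trace = w ⬝ᵥ (M *ᵥ v) := by
  rw [vecMulVec_mul, trace_vecMulVec, dotProduct_comm, dotProduct_mulVec]

theorem vecMulVec_star_add_eq_add_iff {s t : n → 𝕜} (hst : star s ⬝ᵥ t = 0) :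
    vecMulVec (s + t) (star (s + t)) = vecMulVec s (star s) + vecMulVec t (star t) ↔
      s = 0 ∨ t = 0 := by
  have hexpand : vecMulVec (s + t) (star (s + t)) = vecMulVec s (star s) +
      vecMulVec t (star t) + (vecMulVec s (star t) + vecMulVec t (star s)) := by
    rw [star_add, add_vecMulVec, vecMulVec_add, vecMulVec_add]
    abel
  rw [hexpand, add_eq_left]
  refine ⟨fun h => ?_, by rintro (rfl | rfl) <;> simp⟩
  -- applied to `t`, the cross terms give `(star t ⬝ᵥ t) • s`
  have ht := congrArg (· *ᵥ t) h
  simp only [add_mulVec, vecMulVec_mulVec, op_smul_eq_smul, hst, zero_smul, add_zero,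
    zero_mulVec, smul_eq_zero, dotProduct_star_self_eq_zero] at ht
  exact ht.symm

variable [DecidableEq n] [DecidableEq p]

theorem kronecker_mulVec_add_of_mulVec_eq_zero {W : Matrix n n 𝕜} {V : Matrix p p 𝕜}
    {v : n × p → 𝕜} (h₁ : (W ⊗ₖ (1 - V)) *ᵥ v = 0) (h₂ : ((1 - W) ⊗ₖ V) *ᵥ v = 0) :
    (W ⊗ₖ V) *ᵥ v + ((1 - W) ⊗ₖ (1 - V)) *ᵥ v = v := by
  have hsum : (W + (1 - W)) ⊗ₖ (V + (1 - V)) = 1 := by simp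
  conv_rhs => rw [← one_mulVec v, ← hsum]
  simp only [add_kronecker, kronecker_add, add_mulVec, h₁, h₂]
  abel

theorem vecMulVec_star_eq_kronecker_conj_iff {W : Matrix n n 𝕜} {V : Matrix p p 𝕜}
    (hW : IsStarProjection W) (hV : IsStarProjection V) {v : n × p → 𝕜}
    (h₁ : (W ⊗ₖ (1 - V)) *ᵥ v = 0) (h₂ : ((1 - W) ⊗ₖ V) *ᵥ v = 0) :
    vecMulVec v (star v) = (W ⊗ₖ V) * vecMulVec v (star v) * (W ⊗ₖ V) +
        ((1 - W) ⊗ₖ (1 - V)) * vecMulVec v (star v) * ((1 - W) ⊗ₖ (1 - V)) ↔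
      (W ⊗ₖ V) *ᵥ v = 0 ∨ ((1 - W) ⊗ₖ (1 - V)) *ᵥ v = 0 := by
  have hP := hW.kronecker hV
  have hQ := hW.one_sub.kronecker hV.one_sub
  have horth : star ((W ⊗ₖ V) *ᵥ v) ⬝ᵥ ((1 - W) ⊗ₖ (1 - V)) *ᵥ v = 0 := by
    rw [star_mulVec, ← star_eq_conjTranspose, hP.isSelfAdjoint.star_eq, ← dotProduct_mulVec,
      mulVec_mulVec, ← mul_kronecker_mul, hW.mul_one_sub_self, zero_kronecker, zero_mulVec,
      dotProduct_zero]
  rw [hP.mul_vecMulVec_star_mul, hQ.mul_vecMulVec_star_mul,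
    ← vecMulVec_star_add_eq_add_iff horth, kronecker_mulVec_add_of_mulVec_eq_zero h₁ h₂]

end StarProjection

section RankOne

/-- For `x = 0` this is `0`, since `0⁻¹ = 0`. -/
noncomputable def rankOneProj (x : n → 𝕜) : Matrix n n 𝕜 :=
  vecMulVec x ((star x ⬝ᵥ x)⁻¹ • star x)

theorem isStarProjection_rankOneProj (x : n → 𝕜) : IsStarProjection (rankOneProj x) := by
  obtain rfl | hx := eq_or_ne x 0
  · simp [rankOneProj]
  refine ⟨?_, ?_⟩
  · rw [IsIdempotentElem, rankOneProj, vecMulVec_mul_vecMulVec, smul_dotProduct, smul_eq_mul,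
      inv_mul_cancel₀ (dotProduct_star_self_eq_zero.not.2 hx), one_smul]
  · rw [IsSelfAdjoint, star_eq_conjTranspose, rankOneProj, conjTranspose_vecMulVec, star_smul,
      star_inv₀, ← star_dotProduct, star_star, smul_vecMulVec, vecMulVec_smul]

theorem rankOneProj_mulVec_self (x : n → 𝕜) : rankOneProj x *ᵥ x = x := by
  obtain rfl | hx := eq_or_ne x 0
  · simp
  rw [rankOneProj, vecMulVec_mulVec, op_smul_eq_smul, smul_dotProduct, smul_eq_mul,
    inv_mul_cancel₀ (dotProduct_star_self_eq_zero.not.2 hx), one_smul]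

theorem rankOneProj_mul_eq_mul_rankOneProj (X : Matrix n p 𝕜) {x : n → 𝕜} {μ : 𝕜} (hμ : μ ≠ 0)
    (hx : (X * Xᴴ) *ᵥ x = μ • x) : rankOneProj x * X = X * rankOneProj (Xᴴ *ᵥ x) := by
  have hy : star (Xᴴ *ᵥ x) = star x ᵥ* X := by rw [star_mulVec, conjTranspose_conjTranspose]
  have hnorm : star (Xᴴ *ᵥ x) ⬝ᵥ Xᴴ *ᵥ x = μ * (star x ⬝ᵥ x) := by
    rw [hy, ← dotProduct_mulVec, mulVec_mulVec, hx, dotProduct_smul, smul_eq_mul]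
  rw [rankOneProj, rankOneProj, vecMulVec_mul, mul_vecMulVec, mulVec_mulVec, hx, hnorm, hy]
  simp only [smul_vecMul, smul_vecMulVec, vecMulVec_smul, smul_smul]
  rw [mul_inv, mul_right_comm, inv_mul_cancel₀ hμ, one_mul]

/-- `V` and `W` project onto `x` and `Xᴴ x` for an eigenvector `x` of `X Xᴴ` with nonzero
eigenvalue, so that `V X = X W`. -/
theorem exists_isStarProjection_splitting_of_ne_vecMulVec [DecidableEq n] [DecidableEq p]
    (X : Matrix n p 𝕜) (hX : ∀ a b, X ≠ vecMulVec a b) :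
    ∃ (V : Matrix n n 𝕜) (W : Matrix p p 𝕜), IsStarProjection V ∧ IsStarProjection W ∧
      (1 - V) * X * W = 0 ∧ V * X * (1 - W) = 0 ∧ V * X * W ≠ 0 ∧ (1 - V) * X * (1 - W) ≠ 0 := by
  obtain ⟨x, t, ht, hx0, hx⟩ := (isHermitian_mul_conjTranspose_self X).exists_eigenvector_of_ne_zero
    (self_mul_conjTranspose_eq_zero.not.2 (by simpa using hX 0 0))
  rw [RCLike.real_smul_eq_coe_smul (K := 𝕜)] at hx
  have ht' : (t : 𝕜) ≠ 0 := RCLike.ofReal_ne_zero.2 ht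
  have hV := isStarProjection_rankOneProj x
  have hW := isStarProjection_rankOneProj (Xᴴ *ᵥ x)
  have hVW := rankOneProj_mul_eq_mul_rankOneProj X ht' hx
  have h₁ := mul_mul_one_sub_eq_zero hV.isIdempotentElem hVW
  have h₂ := one_sub_mul_mul_eq_zero hW.isIdempotentElem hVW
  refine ⟨_, _, hV, hW, h₂, h₁, ?_, ?_⟩
  · rw [Matrix.mul_sub, Matrix.mul_one, sub_eq_zero] at h₁
    rw [← h₁]
    intro h
    have hVXx : (rankOneProj x * X * Xᴴ) *ᵥ x = (t : 𝕜) • x := by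
      rw [Matrix.mul_assoc, ← mulVec_mulVec, hx, mulVec_smul, rankOneProj_mulVec_self]
    rw [h, Matrix.zero_mul, zero_mulVec, eq_comm, smul_eq_zero] at hVXx
    exact hVXx.elim ht' hx0
  · rw [Matrix.mul_sub, Matrix.mul_one, h₂, sub_zero, Matrix.sub_mul, Matrix.one_mul, sub_ne_zero,
      rankOneProj, vecMulVec_mul]
    exact hX _ _

end RankOne

end Matrix

theorem completelyReducible_vecMulVec_star_iff {n p : Type*} [Fintype n] [Fintype p]
    [DecidableEq n] [DecidableEq p] (v : n × p → ℂ) :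
    CompletelyReducible (vecMulVec v (star v)) ↔
      ∀ (W : Matrix n n ℂ) (V : Matrix p p ℂ), IsStarProjection W → IsStarProjection V →
        (W ⊗ₖ (1 - V)) *ᵥ v = 0 → ((1 - W) ⊗ₖ V) *ᵥ v = 0 →
        (W ⊗ₖ V) *ᵥ v = 0 ∨ ((1 - W) ⊗ₖ (1 - V)) *ᵥ v = 0 := by
  have htrace {P : Matrix (n × p) (n × p) ℂ} (hP : IsStarProjection P) :
      (vecMulVec v (star v) * P).trace = 0 ↔ P *ᵥ v = 0 := by
    rw [trace_vecMulVec_mul, hP.dotProduct_mulVec_eq_zero_iff]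
  refine forall₂_congr fun W V => ⟨fun h hW hV h₁ h₂ => ?_, fun h hWh hW2 hVh hV2 h₁ h₂ => ?_⟩
  · refine (vecMulVec_star_eq_kronecker_conj_iff hW hV h₁ h₂).1 <| h hW.isSelfAdjoint
      hW.isIdempotentElem hV.isSelfAdjoint hV.isIdempotentElem ?_ ?_
    · exact (htrace (hW.kronecker hV.one_sub)).2 h₁
    · exact (htrace (hW.one_sub.kronecker hV)).2 h₂
  · have hW : IsStarProjection W := ⟨hW2, hWh⟩
    have hV : IsStarProjection V := ⟨hV2, hVh⟩
    rw [htrace (hW.kronecker hV.one_sub)] at h₁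
    rw [htrace (hW.one_sub.kronecker hV)] at h₂
    exact (vecMulVec_star_eq_kronecker_conj_iff hW hV h₁ h₂).2 (h hW hV h₁ h₂)

/-- A pure state `γ = v v^* ∈ M_k ⊗ M_m` is completely reducible if and only
if it is separable, i.e. `v = a ⊗ b` is a product vector. -/
theorem stmt19 (k m : ℕ) (v : Fin k × Fin m → ℂ) :
    CompletelyReducible (vecMulVec v (star v)) ↔
      ∃ (a : Fin k → ℂ) (b : Fin m → ℂ), v = fun p => a p.1 * b p.2 := by
  rw [completelyReducible_vecMulVec_star_iff]
  constructor
  · intro h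
    obtain ⟨X, rfl⟩ := vec_bijective.2 v
    by_contra hv
    obtain ⟨V, W, hV, hW, h₁, h₂, hP, hQ⟩ := exists_isStarProjection_splitting_of_ne_vecMulVec X
      fun b a hX => hv ⟨a, b, by rw [hX, vec_vecMulVec]⟩
    have hsplit := h Wᵀ V hW.transpose hV
    simp only [kronecker_mulVec_vec, transpose_sub, transpose_one, transpose_transpose,
      vec_eq_zero_iff] at hsplit
    exact (hsplit h₁ h₂).elim hP hQ
  · rintro ⟨a, b, rfl⟩ W V _ _ h₁ _
    simp only [← vec_vecMulVec, kronecker_mulVec_vec_vecMulVec, vec_eq_zero_iff,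
      vecMulVec_eq_zero_iff] at h₁ ⊢
    rcases h₁ with hb | ha
    · exact Or.inr (Or.inl hb)
    · exact Or.inl (Or.inr ha)
end
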